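/- arXiv:2012.02178 — 6 statements merged into one kernel-verified Lean document; each statement's English description precedes it below -/
import Mathlib

section
/- For a finite Markov chain with transition matrix T, the Cesàro limit T^∞ = lim_{n→∞} (1/n) ∑_{t=1}^n T^t exists (entrywise). -/
/-!
The powers of a stochastic matrix `T` stay in the compact convex set of stochastic matrices, hence
so do the Cesàro means `Aₙ`, which therefore have cluster points. Since
`T Aₙ - Aₙ = Aₙ T - Aₙ = (T ^ (n + 1) - T) / n → 0`, every cluster point `P` satisfies
`T P = P = P T`, so `P Aₙ = Aₙ P = P`. For two cluster points `P`, `Q` this gives `Q P = P` and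
`Q P = Q`: the cluster point is unique, and the means converge.
-/

open Filter Topology

theorem MapClusterPt.eq_of_tendsto {X α : Type*} [TopologicalSpace X] [T2Space X] {F : Filter α}
    {u : α → X} {y z : X} (h : MapClusterPt y F u) (hu : Tendsto u F (𝓝 z)) : y = z :=
  eq_of_nhds_neBot (ClusterPt.mono h hu).neBot

section Cesaro

variable {A : Type*} [Ring A]

theorem mul_sum_Icc_pow (a : A) (n : ℕ) :
    a * ∑ t ∈ Finset.Icc 1 n, a ^ t = ∑ t ∈ Finset.Icc 1 n, a ^ t + (a ^ (n + 1) - a) := by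
  induction n with
  | zero => simp
  | succ n ih =>
    rw [Finset.sum_Icc_succ_top (by omega), mul_add, ih, ← pow_succ']
    abel

theorem mul_pow_eq_self {a p : A} (h : p * a = p) (t : ℕ) : p * a ^ t = p := by
  induction t with
  | zero => simp
  | succ t ih => rw [pow_succ, ← mul_assoc, ih, h]

theorem pow_mul_eq_self {a p : A} (h : a * p = p) (t : ℕ) : a ^ t * p = p := by
  induction t with
  | zero => simp
  | succ t ih => rw [pow_succ', mul_assoc, ih, h]

variable [Algebra ℝ A]

noncomputable def cesaroMean (a : A) (n : ℕ) : A := (n : ℝ)⁻¹ • ∑ t ∈ Finset.Icc 1 n, a ^ t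

theorem commute_cesaroMean (a : A) (n : ℕ) : Commute a (cesaroMean a n) :=
  (Commute.sum_right _ _ _ fun t _ => Commute.self_pow a t).smul_right _

theorem mul_cesaroMean (a : A) (n : ℕ) :
    a * cesaroMean a n = cesaroMean a n + (n : ℝ)⁻¹ • (a ^ (n + 1) - a) := by
  rw [cesaroMean, mul_smul_comm, mul_sum_Icc_pow, smul_add]

theorem cesaroMean_mul (a : A) (n : ℕ) :
    cesaroMean a n * a = cesaroMean a n + (n : ℝ)⁻¹ • (a ^ (n + 1) - a) :=
  (commute_cesaroMean a n).eq.symm.trans (mul_cesaroMean a n)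

theorem inv_smul_sum_Icc_const (p : A) {n : ℕ} (hn : n ≠ 0) :
    (n : ℝ)⁻¹ • ∑ _t ∈ Finset.Icc 1 n, p = p := by
  rw [Finset.sum_const, Nat.card_Icc, Nat.add_sub_cancel, ← Nat.cast_smul_eq_nsmul ℝ, smul_smul,
    inv_mul_cancel₀ (Nat.cast_ne_zero.2 hn), one_smul]

theorem mul_cesaroMean_eq_self {a p : A} (h : p * a = p) {n : ℕ} (hn : n ≠ 0) :
    p * cesaroMean a n = p := by
  rw [cesaroMean, mul_smul_comm, Finset.mul_sum]
  simp_rw [mul_pow_eq_self h]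
  exact inv_smul_sum_Icc_const p hn

theorem cesaroMean_mul_eq_self {a p : A} (h : a * p = p) {n : ℕ} (hn : n ≠ 0) :
    cesaroMean a n * p = p := by
  rw [cesaroMean, smul_mul_assoc, Finset.sum_mul]
  simp_rw [pow_mul_eq_self h]
  exact inv_smul_sum_Icc_const p hn

theorem Convex.cesaroMean_mem {K : Set A} (hK : Convex ℝ K) {a : A} (ha : ∀ t, a ^ t ∈ K) {n : ℕ}
    (hn : n ≠ 0) : cesaroMean a n ∈ K := by
  rw [cesaroMean, Finset.smul_sum]
  refine hK.sum_mem (fun _ _ => by positivity) ?_ fun t _ => ha t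
  rw [Finset.sum_const, Nat.card_Icc, Nat.add_sub_cancel, nsmul_eq_mul,
    mul_inv_cancel₀ (Nat.cast_ne_zero.2 hn)]

variable [TopologicalSpace A] [IsTopologicalRing A] [T2Space A]

theorem mul_eq_self_of_mapClusterPt_cesaroMean {a p : A}
    (herr : Tendsto (fun n : ℕ => (n : ℝ)⁻¹ • (a ^ (n + 1) - a)) atTop (𝓝 0))
    (hp : MapClusterPt p atTop (cesaroMean a)) : a * p = p ∧ p * a = p := by
  have hleft : MapClusterPt (a * p - p) atTop (fun n => a * cesaroMean a n - cesaroMean a n) :=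
    hp.continuousAt_comp (f := fun x => a * x - x) (by fun_prop)
  have hright : MapClusterPt (p * a - p) atTop (fun n => cesaroMean a n * a - cesaroMean a n) :=
    hp.continuousAt_comp (f := fun x => x * a - x) (by fun_prop)
  simp only [mul_cesaroMean, cesaroMean_mul, add_sub_cancel_left] at hleft hright
  exact ⟨sub_eq_zero.1 (hleft.eq_of_tendsto herr), sub_eq_zero.1 (hright.eq_of_tendsto herr)⟩

theorem mapClusterPt_cesaroMean_unique {a p q : A}
    (herr : Tendsto (fun n : ℕ => (n : ℝ)⁻¹ • (a ^ (n + 1) - a)) atTop (𝓝 0))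
    (hp : MapClusterPt p atTop (cesaroMean a)) (hq : MapClusterPt q atTop (cesaroMean a)) :
    p = q := by
  have hqp_p : q * p = p := by
    have : MapClusterPt (q * p) atTop (fun n => cesaroMean a n * p) :=
      hq.continuousAt_comp (f := (· * p)) (by fun_prop)
    refine this.eq_of_tendsto (tendsto_const_nhds.congr' ?_)
    filter_upwards [eventually_ne_atTop 0] with n hn
    exact (cesaroMean_mul_eq_self (mul_eq_self_of_mapClusterPt_cesaroMean herr hp).1 hn).symm
  have hqp_q : q * p = q := by
    have : MapClusterPt (q * p) atTop (fun n => q * cesaroMean a n) :=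
      hp.continuousAt_comp (f := (q * ·)) (by fun_prop)
    refine this.eq_of_tendsto (tendsto_const_nhds.congr' ?_)
    filter_upwards [eventually_ne_atTop 0] with n hn
    exact (mul_cesaroMean_eq_self (mul_eq_self_of_mapClusterPt_cesaroMean herr hq).2 hn).symm
  rw [← hqp_p, hqp_q]

variable [ContinuousSMul ℝ A]

theorem exists_tendsto_cesaroMean {K : Set A} (hKc : IsCompact K) (hKconv : Convex ℝ K) {a : A}
    (ha : ∀ t, a ^ t ∈ K) : ∃ p, Tendsto (cesaroMean a) atTop (𝓝 p) := by
  have hmem : ∀ᶠ n in atTop, cesaroMean a n ∈ K :=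
    (eventually_ne_atTop 0).mono fun n hn => hKconv.cesaroMean_mem ha hn
  have herr : Tendsto (fun n : ℕ => (n : ℝ)⁻¹ • (a ^ (n + 1) - a)) atTop (𝓝 0) :=
    ((hKc.isVonNBounded ℝ).sub (hKc.isVonNBounded ℝ)).smul_tendsto_zero
      (.of_forall fun n => Set.sub_mem_sub (ha (n + 1)) (by simpa using ha 1))
      tendsto_inv_atTop_nhds_zero_nat
  obtain ⟨p, -, hp⟩ := hKc.exists_mapClusterPt_of_frequently hmem.frequently
  exact ⟨p, hKc.tendsto_nhds_of_unique_mapClusterPt hmem fun q _ hq =>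
    mapClusterPt_cesaroMean_unique herr hq hp⟩

end Cesaro

namespace Matrix

theorem isCompact_rowStochastic {n : Type*} [Fintype n] [DecidableEq n] :
    IsCompact (rowStochastic ℝ n : Set (Matrix n n ℝ)) := by
  have hcube : IsCompact (Set.univ.pi fun _ : n => Set.univ.pi fun _ : n => Set.Icc (0 : ℝ) 1) :=
    isCompact_univ_pi fun _ => isCompact_univ_pi fun _ => isCompact_Icc
  refine hcube.of_isClosed_subset ?_ fun M hM => ?_
  · have hset : (rowStochastic ℝ n : Set (Matrix n n ℝ)) =
        (⋂ i, ⋂ j, {M | 0 ≤ M i j}) ∩ {M | M *ᵥ 1 = 1} := by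
      ext M
      simp [mem_rowStochastic]
    rw [hset]
    refine .inter (isClosed_iInter fun i => isClosed_iInter fun j => ?_) (isClosed_eq ?_ ?_)
    · exact isClosed_le continuous_const ((continuous_apply j).comp (continuous_apply i))
    · exact continuous_id.matrix_mulVec continuous_const
    · exact continuous_const
  · exact Set.mem_univ_pi.2 fun i => Set.mem_univ_pi.2 fun j =>
      ⟨nonneg_of_mem_rowStochastic hM, le_one_of_mem_rowStochastic hM⟩

end Matrix

/-- For a finite Markov chain with row-stochastic transition matrix `T`,
the Cesàro limit `T^∞ = lim_{n→∞} (1/n) ∑_{t=1}^n T^t` exists (entrywise). -/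
theorem cesaro_limit_exists {S : Type*} [Fintype S] [DecidableEq S]
    (T : Matrix S S ℝ)
    (hnonneg : ∀ s s', 0 ≤ T s s') (hrow : ∀ s, ∑ s', T s s' = 1) :
    ∃ Tinf : Matrix S S ℝ,
      Tendsto (fun n : ℕ => (n : ℝ)⁻¹ • ∑ t ∈ Finset.Icc 1 n, T ^ t)
        atTop (nhds Tinf) := by
  have hT : T ∈ Matrix.rowStochastic ℝ S := Matrix.mem_rowStochastic_iff_sum.2 ⟨hnonneg, hrow⟩
  exact exists_tendsto_cesaroMean Matrix.isCompact_rowStochastic Matrix.convex_rowStochastic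
    fun t => pow_mem hT t
end

section
/- If x is a vector over state-action pairs of a finite MDP satisfying the stationarity constraints ∑_s ∑_{a∈A(s)} x_{sa} T(s'|s,a) = ∑_{a∈A(s')} x_{s'a} for all s', with x ≥ 0, and π is the policy defined by π(a|s) = x_{sa}/x_s whenever x_s := ∑_a x_{sa} > 0 (arbitrary otherwise), then the marginal vector (x_s)_{s∈S} satisfies x^⊤ T_π = x^⊤, i.e., x is a stationary (invariant) vector of the induced Markov chain. -/
/-- If `x` satisfies the stationarity constraints of the LP and `π` is the
policy obtained by normalizing `x` (on states with positive mass), then the marginal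
vector `(x_s)_s` is a stationary (invariant) vector of the induced Markov chain:
`x^⊤ T_π = x^⊤`. -/
theorem lp_solution_is_stationary_vector {S A : Type*} [Fintype S]
    (avail : S → Finset A) (T : S → A → S → ℝ) (x : S → A → ℝ) (π : S → A → ℝ)
    (hT0 : ∀ s a s', 0 ≤ T s a s')
    (hx0 : ∀ s a, 0 ≤ x s a)
    (hstat : ∀ s', ∑ s, ∑ a ∈ avail s, x s a * T s a s' = ∑ a ∈ avail s', x s' a)
    (hπ0 : ∀ s a, 0 ≤ π s a) (hπ1 : ∀ s, ∑ a ∈ avail s, π s a = 1)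
    (hπx : ∀ s, 0 < ∑ a ∈ avail s, x s a →
      ∀ a, π s a = x s a / ∑ a' ∈ avail s, x s a') :
    ∀ s', ∑ s, (∑ a ∈ avail s, x s a) * (∑ a ∈ avail s, T s a s' * π s a)
        = ∑ a ∈ avail s', x s' a := by
  intro s'
  rw [← hstat s']
  apply Finset.sum_congr rfl
  intro s _
  rcases lt_or_eq_of_le (Finset.sum_nonneg fun a _ => hx0 s a) with hpos | hzero
  · rw [Finset.mul_sum]
    apply Finset.sum_congr rfl
    intro a ha
    rw [hπx s hpos a]
    field_simp
  · have hall : ∀ a ∈ avail s, x s a = 0 :=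
      (Finset.sum_eq_zero_iff_of_nonneg (fun a _ => hx0 s a)).mp hzero.symm
    rw [← hzero, zero_mul]
    exact (Finset.sum_eq_zero fun a ha => by rw [hall a ha, zero_mul]).symm
end

section
/- If F is the set of transient states of a finite Markov chain and Z is the submatrix of the transition matrix restricted to transitions within F, then the matrix I − Z is invertible, and the (f,f') entry of (I−Z)^{-1} equals the expected total number of visits to f' starting from f. -/
/-!
Fix a transient state `s`, let `h x` be the probability of ever reaching `s` from `x` and
`r = returnProb T s = (T *ᵥ h) s < 1`. First-step analysis gives `h x = (T *ᵥ h) x` for `x ≠ s`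
and `h s = 1`, so `C • h` with `C = (1 - r)⁻¹` satisfies `Pi.single s 1 + T *ᵥ (C • h) ≤ C • h`.
By induction every column `∑_{m<M} T ^ m *ᵥ Pi.single s 1` of the partial Green's function lies
below `C • h ≤ C`, hence the expected number of visits to `s` is finite. On the transient states
`Z ^ t ≤ T ^ t` entrywise, so the Neumann series `∑ Z ^ t` converges and inverts `1 - Z`.
-/

/-- The probability, starting from `s`, of eventually returning to `s`. -/
noncomputable def returnProb {S : Type*} [Fintype S] [DecidableEq S]
    (T : Matrix S S ℝ) (s : S) : ℝ :=
  ∑' n : ℕ, (T * (Matrix.of fun a b => if a = s then 0 else T a b) ^ n) s s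

/-- A state is recurrent if the probability of eventually returning to it is one;
otherwise it is transient. -/
def Recurrent {S : Type*} [Fintype S] [DecidableEq S]
    (T : Matrix S S ℝ) (s : S) : Prop :=
  returnProb T s = 1

open Finset Matrix

namespace Matrix

theorem updateRow_zero_apply_nonneg {m n : Type*} [DecidableEq m] {M : Matrix m n ℝ}
    (hM : ∀ a b, 0 ≤ M a b) (i : m) (a : m) (b : n) : 0 ≤ M.updateRow i 0 a b := by
  by_cases h : a = i <;> simp [h, updateRow_apply, hM]

variable {ι S : Type*} [Fintype S] {A : Matrix S S ℝ}

theorem mulVec_mono_of_nonneg (hA : ∀ i j, 0 ≤ A i j) {v w : S → ℝ} (hvw : v ≤ w) :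
    A *ᵥ v ≤ A *ᵥ w := fun i =>
  sum_le_sum fun j _ => mul_le_mul_of_nonneg_left (hvw j) (hA i j)

/-- `1 - A *ᵥ 1` is the mass killed in one step; the sum telescopes to `1 - A ^ N *ᵥ 1`. -/
theorem sum_range_pow_mulVec_one_sub_le [DecidableEq S] (hA : ∀ i j, 0 ≤ A i j) (N : ℕ)
    (i : S) :
    ∑ k ∈ range N, (A ^ k *ᵥ (1 - A *ᵥ 1)) i ≤ 1 := by
  have htel : ∑ k ∈ range N, A ^ k *ᵥ (1 - A *ᵥ 1) = 1 - A ^ N *ᵥ 1 := by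
    have hkill : (1 : S → ℝ) - A *ᵥ 1 = (1 - A) *ᵥ 1 := by rw [sub_mulVec, one_mulVec]
    simp_rw [hkill, mulVec_mulVec, ← sum_mulVec, ← sum_mul, geom_sum_mul_neg, sub_mulVec,
      one_mulVec]
  have hnonneg : 0 ≤ (A ^ N *ᵥ 1) i :=
    sum_nonneg fun j _ => mul_nonneg (pow_apply_nonneg hA N i j) zero_le_one
  rw [← Finset.sum_apply, htel]
  simp only [Pi.sub_apply, Pi.one_apply]
  linarith

theorem pow_submatrix_apply_le [DecidableEq S] [Fintype ι] [DecidableEq ι]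
    (hA : ∀ i j, 0 ≤ A i j) {e : ι → S} (he : Function.Injective e) (t : ℕ) (i j : ι) :
    (A.submatrix e e ^ t) i j ≤ (A ^ t) (e i) (e j) := by
  induction t generalizing j with
  | zero => simp [one_apply, he.eq_iff]
  | succ t ih =>
    rw [pow_succ, pow_succ, mul_apply, mul_apply]
    calc ∑ k, (A.submatrix e e ^ t) i k * A (e k) (e j)
        ≤ ∑ k, (A ^ t) (e i) (e k) * A (e k) (e j) :=
          sum_le_sum fun k _ => mul_le_mul_of_nonneg_right (ih k) (hA _ _)
      _ = ∑ y ∈ univ.map ⟨e, he⟩, (A ^ t) (e i) y * A y (e j) := by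
          rw [sum_map]; rfl
      _ ≤ ∑ y, (A ^ t) (e i) y * A y (e j) :=
          sum_le_sum_of_subset_of_nonneg (subset_univ _) fun y _ _ =>
            mul_nonneg (pow_apply_nonneg hA t _ _) (hA _ _)

end Matrix

section HittingProbability

variable {S : Type*} [Fintype S] [DecidableEq S] {T : Matrix S S ℝ} {s : S}

/-- `(T.updateRow s 0 ^ n) x s` is the probability that the chain started at `x` first visits `s`
at time `n`, so this is the probability that it ever visits `s`. -/
noncomputable def hitProb (T : Matrix S S ℝ) (s x : S) : ℝ :=
  ∑' n : ℕ, (T.updateRow s 0 ^ n) x s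

theorem returnProb_eq_tsum_updateRow (T : Matrix S S ℝ) (s : S) :
    returnProb T s = ∑' n : ℕ, (T * T.updateRow s 0 ^ n) s s := by
  have hkill : (of fun a b => if a = s then 0 else T a b) = T.updateRow s 0 := by
    ext a b
    by_cases h : a = s <;> simp [h, updateRow_apply]
  rw [returnProb, hkill]

theorem hitProb_self : hitProb T s s = 1 := by
  rw [hitProb, tsum_eq_single 0]
  · simp
  · intro n hn
    obtain ⟨k, rfl⟩ := Nat.exists_eq_succ_of_ne_zero hn
    simp [pow_succ', mul_apply]

theorem updateRow_zero_mulVec_one (hrow : ∀ a, ∑ b, T a b = 1) :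
    T.updateRow s 0 *ᵥ 1 = 1 - Pi.single s 1 := by
  ext a
  by_cases h : a = s
  · subst h; simp [mulVec, dotProduct]
  · simp [mulVec, dotProduct, h, hrow]

theorem sum_range_updateRow_pow_apply_le (hnonneg : ∀ a b, 0 ≤ T a b)
    (hrow : ∀ a, ∑ b, T a b = 1) (x : S) (N : ℕ) :
    ∑ n ∈ range N, (T.updateRow s 0 ^ n) x s ≤ 1 := by
  simpa [updateRow_zero_mulVec_one hrow, mulVec_single_one] using
    sum_range_pow_mulVec_one_sub_le (updateRow_zero_apply_nonneg hnonneg s) N x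

theorem summable_updateRow_pow_apply (hnonneg : ∀ a b, 0 ≤ T a b)
    (hrow : ∀ a, ∑ b, T a b = 1) (x : S) :
    Summable fun n => (T.updateRow s 0 ^ n) x s :=
  summable_of_sum_range_le
    (fun n => pow_apply_nonneg (updateRow_zero_apply_nonneg hnonneg s) n x s)
    (sum_range_updateRow_pow_apply_le hnonneg hrow x)

theorem hitProb_nonneg (hnonneg : ∀ a b, 0 ≤ T a b) (x : S) : 0 ≤ hitProb T s x :=
  tsum_nonneg fun n => pow_apply_nonneg (updateRow_zero_apply_nonneg hnonneg s) n x s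

theorem hitProb_le_one (hnonneg : ∀ a b, 0 ≤ T a b) (hrow : ∀ a, ∑ b, T a b = 1) (x : S) :
    hitProb T s x ≤ 1 :=
  Real.tsum_le_of_sum_range_le
    (fun n => pow_apply_nonneg (updateRow_zero_apply_nonneg hnonneg s) n x s)
    (sum_range_updateRow_pow_apply_le hnonneg hrow x)

theorem mulVec_hitProb_apply (hnonneg : ∀ a b, 0 ≤ T a b) (hrow : ∀ a, ∑ b, T a b = 1) (x : S) :
    (T *ᵥ hitProb T s) x = ∑' n : ℕ, (T * T.updateRow s 0 ^ n) x s := by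
  simp only [mulVec, dotProduct, hitProb, mul_apply]
  rw [Summable.tsum_finsetSum fun y _ => (summable_updateRow_pow_apply hnonneg hrow y).mul_left _]
  exact sum_congr rfl fun y _ =>
    ((summable_updateRow_pow_apply hnonneg hrow y).tsum_mul_left _).symm

theorem hitProb_eq_mulVec_apply_of_ne (hnonneg : ∀ a b, 0 ≤ T a b)
    (hrow : ∀ a, ∑ b, T a b = 1) {x : S} (hx : x ≠ s) :
    hitProb T s x = (T *ᵥ hitProb T s) x := by
  rw [mulVec_hitProb_apply hnonneg hrow, hitProb,
    (summable_updateRow_pow_apply hnonneg hrow x).tsum_eq_zero_add]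
  simp [hx, pow_succ', mul_apply]

theorem returnProb_eq_mulVec_hitProb_apply (hnonneg : ∀ a b, 0 ≤ T a b)
    (hrow : ∀ a, ∑ b, T a b = 1) :
    returnProb T s = (T *ᵥ hitProb T s) s := by
  rw [mulVec_hitProb_apply hnonneg hrow, returnProb_eq_tsum_updateRow]

theorem returnProb_le_one (hnonneg : ∀ a b, 0 ≤ T a b) (hrow : ∀ a, ∑ b, T a b = 1) :
    returnProb T s ≤ 1 := by
  rw [returnProb_eq_mulVec_hitProb_apply hnonneg hrow, ← hrow s]
  exact sum_le_sum fun y _ =>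
    mul_le_of_le_one_right (hnonneg s y) (hitProb_le_one hnonneg hrow y)

theorem sum_range_pow_mulVec_single_le (hnonneg : ∀ a b, 0 ≤ T a b)
    (hrow : ∀ a, ∑ b, T a b = 1) (hr : returnProb T s < 1) (M : ℕ) :
    (∑ m ∈ range M, T ^ m) *ᵥ Pi.single s 1 ≤ (1 - returnProb T s)⁻¹ • hitProb T s := by
  set C := (1 - returnProb T s)⁻¹
  have hC : C * (1 - returnProb T s) = 1 := inv_mul_cancel₀ (by linarith)
  induction M with
  | zero =>
    intro x
    simpa using mul_nonneg (inv_nonneg.2 (by linarith)) (hitProb_nonneg hnonneg x)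
  | succ M ih =>
    rw [geom_sum_succ, add_mulVec, one_mulVec, ← mulVec_mulVec]
    calc T *ᵥ ((∑ m ∈ range M, T ^ m) *ᵥ Pi.single s 1) + Pi.single s 1
        ≤ T *ᵥ (C • hitProb T s) + Pi.single s 1 :=
          add_le_add_left (mulVec_mono_of_nonneg hnonneg ih) _
      _ ≤ C • hitProb T s := by
          intro x
          rw [mulVec_smul]
          by_cases hx : x = s
          · subst hx
            simp [hitProb_self, ← returnProb_eq_mulVec_hitProb_apply hnonneg hrow]
            linarith
          · simp [hx, ← hitProb_eq_mulVec_apply_of_ne hnonneg hrow hx]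

theorem summable_pow_apply_of_not_recurrent (hnonneg : ∀ a b, 0 ≤ T a b)
    (hrow : ∀ a, ∑ b, T a b = 1) (hs : ¬ Recurrent T s) (x : S) :
    Summable fun m => (T ^ m) x s := by
  have hr : returnProb T s < 1 := (returnProb_le_one hnonneg hrow).lt_of_ne hs
  refine summable_of_sum_range_le (c := (1 - returnProb T s)⁻¹)
    (fun m => pow_apply_nonneg hnonneg m x s) fun M => ?_
  calc ∑ m ∈ range M, (T ^ m) x s
      = ((∑ m ∈ range M, T ^ m) *ᵥ Pi.single s 1) x := by simp [Matrix.sum_apply]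
    _ ≤ (1 - returnProb T s)⁻¹ * hitProb T s x :=
        sum_range_pow_mulVec_single_le hnonneg hrow hr M x
    _ ≤ (1 - returnProb T s)⁻¹ := mul_le_of_le_one_right (inv_nonneg.2 (by linarith))
        (hitProb_le_one hnonneg hrow x)

end HittingProbability

/-- If `F` is the set of transient states of a finite Markov chain and
`Z = T|_{F×F}`, then `I − Z` is invertible and the `(f,f')` entry of `(I−Z)⁻¹` equals
the expected total number of visits to `f'` starting from `f`, i.e. `∑_t (Z^t)(f,f')`. -/
theorem fundamental_matrix_of_transient_states {S : Type*} [Fintype S] [DecidableEq S]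
    (T : Matrix S S ℝ)
    (hnonneg : ∀ s s', 0 ≤ T s s') (hrow : ∀ s, ∑ s', T s s' = 1)
    (F : Finset S) (hF : ∀ s, s ∈ F ↔ ¬ Recurrent T s)
    (Z : Matrix F F ℝ) (hZ : ∀ f f' : F, Z f f' = T f f') :
    IsUnit (1 - Z) ∧
      ∀ f f' : F, (1 - Z)⁻¹ f f' = ∑' t : ℕ, ((Z ^ t) f f') := by
  have hZT : Z = T.submatrix (↑) (↑) := by ext f f'; exact hZ f f'
  have hsum : Summable fun t => Z ^ t := by
    refine Pi.summable.2 fun f => Pi.summable.2 fun f' => ?_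
    subst hZT
    exact (summable_pow_apply_of_not_recurrent hnonneg hrow ((hF f').1 f'.2) f).of_nonneg_of_le
      (fun t => pow_apply_nonneg (fun _ _ => hnonneg _ _) t f f')
      (fun t => pow_submatrix_apply_le hnonneg Subtype.val_injective t f f')
  have hinv : (1 - Z) * ∑' t, Z ^ t = 1 := hsum.one_sub_mul_tsum_pow
  refine ⟨⟨⟨1 - Z, _, hinv, hsum.tsum_pow_mul_one_sub⟩, rfl⟩, fun f f' => ?_⟩
  rw [inv_eq_right_inv hinv]
  exact (congrFun (tsum_apply hsum) f').trans (tsum_apply (Pi.summable.1 hsum f))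
end

section
/- Every edge-preserving policy of a finite MDP is class-preserving: if π is a stationary policy with π(a|s) > 0 for all s in the TSCCs of the MDP and all a ∈ A(s), and the union of TSCCs of the induced chain equals that of the MDP, then each TSCC of the MDP is exactly a TSCC of the induced Markov chain M_π. -/
/-!
On the TSCC states of the MDP the policy plays every available action, so there the induced
chain has exactly the edges of the MDP, while elsewhere it has at most those edges. Hence a
TSCC `C` of the MDP stays strongly connected and closed in `M_π`. It is also reached from the
support of `β` in `M_π`: by the hypothesis on the recurrent sets a state of `C` lies in some
TSCC `D` of `M_π`, and `D` is reached from the support of `β` and is strongly connected.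
-/

open Filter

/-- A terminal strongly connected component of the directed graph with edge relation
`E`: nonempty, strongly connected, closed (no outgoing edges), and reachable from the
support of the initial distribution `β`. -/
def IsTSCC {S : Type*} (E : S → S → Prop) (β : S → ℝ) (C : Set S) : Prop :=
  C.Nonempty ∧
  (∀ s ∈ C, ∀ s' ∈ C, Relation.ReflTransGen E s s') ∧
  (∀ s ∈ C, ∀ s', E s s' → s' ∈ C) ∧
  (∃ s₀, 0 < β s₀ ∧ ∃ s ∈ C, Relation.ReflTransGen E s₀ s)

/-- The union of all TSCC states. -/
def rSet {S : Type*} (E : S → S → Prop) (β : S → ℝ) : Set S :=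
  {s | ∃ C : Set S, IsTSCC E β C ∧ s ∈ C}

/-- Edge relation of the transition graph of an MDP. -/
def mdpEdge {S A : Type*} (avail : S → Finset A) (T : S → A → S → ℝ)
    (s s' : S) : Prop :=
  ∃ a ∈ avail s, 0 < T s a s'

/-- Edge relation of the transition graph of the Markov chain induced by policy `π`. -/
def chainEdge {S A : Type*} (avail : S → Finset A) (T : S → A → S → ℝ)
    (π : S → A → ℝ) (s s' : S) : Prop :=
  0 < ∑ a ∈ avail s, π s a * T s a s'

/-- `π` is a stationary policy: a probability distribution over `avail s` at each `s`. -/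
def IsPolicy {S A : Type*} (avail : S → Finset A) (π : S → A → ℝ) : Prop :=
  (∀ s a, 0 ≤ π s a) ∧ ∀ s, ∑ a ∈ avail s, π s a = 1

/-- The multichain LP constraints: stationarity of `x`, flow balance of `y` with
initial distribution `β`, `x` vanishing outside the TSCCs, `x ∈ [0,1]`, `y ≥ 0`. -/
def LPConstraints {S A : Type*} [Fintype S] (avail : S → Finset A)
    (T : S → A → S → ℝ) (β : S → ℝ) (x y : S → A → ℝ) : Prop :=
  (∀ s a, 0 ≤ x s a ∧ x s a ≤ 1) ∧ (∀ s a, 0 ≤ y s a) ∧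
  (∀ s', ∑ s, ∑ a ∈ avail s, x s a * T s a s' = ∑ a ∈ avail s', x s' a) ∧
  (∀ s', ∑ s, ∑ a ∈ avail s, y s a * T s a s' =
      (∑ a ∈ avail s', (x s' a + y s' a)) - β s') ∧
  (∀ s, s ∉ rSet (mdpEdge avail T) β → ∑ a ∈ avail s, x s a = 0)

/-- `π` is the policy derived from `(x,y)` by normalization. -/
def DerivedPolicy {S A : Type*} (avail : S → Finset A)
    (x y π : S → A → ℝ) : Prop :=
  (∀ s, 0 < ∑ a ∈ avail s, x s a →
      ∀ a, π s a = x s a / ∑ a' ∈ avail s, x s a') ∧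
  (∀ s, ∑ a ∈ avail s, x s a = 0 → 0 < ∑ a ∈ avail s, y s a →
      ∀ a, π s a = y s a / ∑ a' ∈ avail s, y s a')

/-- `π` is class-preserving up to unichain: the recurrent set of the induced chain lies
inside the TSCCs of the MDP, and each TSCC of the MDP contains a unique TSCC of the
induced chain. -/
def IsCPU {S A : Type*} (avail : S → Finset A) (T : S → A → S → ℝ)
    (β : S → ℝ) (π : S → A → ℝ) : Prop :=
  rSet (chainEdge avail T π) β ⊆ rSet (mdpEdge avail T) β ∧
  ∀ C : Set S, IsTSCC (mdpEdge avail T) β C →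
    ∃! D : Set S, D ⊆ C ∧ IsTSCC (chainEdge avail T π) β D

/-- `π` is class-preserving: the induced chain has exactly the TSCCs of the MDP. -/
def IsCP {S A : Type*} (avail : S → Finset A) (T : S → A → S → ℝ)
    (β : S → ℝ) (π : S → A → ℝ) : Prop :=
  rSet (chainEdge avail T π) β = rSet (mdpEdge avail T) β ∧
  ∀ C : Set S, IsTSCC (mdpEdge avail T) β C ↔ IsTSCC (chainEdge avail T π) β C

/-- `π` is edge-preserving: it plays every available action on the TSCC states of the
MDP and its induced recurrent set equals that of the MDP. -/
def IsEP {S A : Type*} (avail : S → Finset A) (T : S → A → S → ℝ)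
    (β : S → ℝ) (π : S → A → ℝ) : Prop :=
  rSet (chainEdge avail T π) β = rSet (mdpEdge avail T) β ∧
  ∀ s ∈ rSet (mdpEdge avail T) β, ∀ a ∈ avail s, 0 < π s a

open Relation

theorem Relation.ReflTransGen.mono_on_of_closed {α : Type*} {r p : α → α → Prop} {C : Set α}
    (hC : ∀ a ∈ C, ∀ b, r a b → b ∈ C) (hrp : ∀ a ∈ C, ∀ b, r a b → p a b)
    {a b : α} (ha : a ∈ C) (hab : ReflTransGen r a b) : ReflTransGen p a b ∧ b ∈ C := by
  induction hab with
  | refl => exact ⟨.refl, ha⟩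
  | tail _ hcd ih => exact ⟨ih.1.tail (hrp _ ih.2 _ hcd), hC _ ih.2 _ hcd⟩

section Graph

variable {S : Type*} {E E' : S → S → Prop} {β : S → ℝ} {C : Set S}

theorem exists_reflTransGen_of_mem_rSet {s : S} (hs : s ∈ rSet E β) :
    ∃ s₀, 0 < β s₀ ∧ ReflTransGen E s₀ s := by
  obtain ⟨D, ⟨-, hconn, -, s₀, hβ, d, hd, hreach⟩, hsD⟩ := hs
  exact ⟨s₀, hβ, hreach.trans (hconn d hd s hsD)⟩

theorem IsTSCC.of_edge_iff_on (hC : IsTSCC E β C) (hE'E : ∀ s s', E' s s' → E s s')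
    (hEE' : ∀ s ∈ C, ∀ s', E s s' → E' s s') (hmeet : ∃ s ∈ C, s ∈ rSet E' β) :
    IsTSCC E' β C := by
  obtain ⟨hne, hconn, hclosed, -⟩ := hC
  refine ⟨hne, fun s hs s' hs' => ?_, fun s hs s' h => hclosed s hs s' (hE'E s s' h), ?_⟩
  · exact ((hconn s hs s' hs').mono_on_of_closed hclosed hEE' hs).1
  · obtain ⟨s, hs, hsr⟩ := hmeet
    obtain ⟨s₀, hβ, hreach⟩ := exists_reflTransGen_of_mem_rSet hsr
    exact ⟨s₀, hβ, s, hs, hreach⟩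

end Graph

section MDP

variable {S A : Type*} {avail : S → Finset A} {T : S → A → S → ℝ} {π : S → A → ℝ}

theorem mdpEdge_of_chainEdge (hT0 : ∀ s a s', 0 ≤ T s a s') {s s' : S}
    (h : chainEdge avail T π s s') : mdpEdge avail T s s' := by
  obtain ⟨a, ha, hlt⟩ := Finset.exists_lt_of_sum_lt (by rwa [Finset.sum_const_zero] :
    ∑ a ∈ avail s, (0 : ℝ) < ∑ a ∈ avail s, π s a * T s a s')
  refine ⟨a, ha, (hT0 s a s').lt_of_ne fun hT => ?_⟩
  rw [← hT, mul_zero] at hlt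
  exact hlt.false

theorem chainEdge_of_mdpEdge (hT0 : ∀ s a s', 0 ≤ T s a s') {s s' : S}
    (hπ0 : ∀ a, 0 ≤ π s a) (hπpos : ∀ a ∈ avail s, 0 < π s a)
    (h : mdpEdge avail T s s') : chainEdge avail T π s s' := by
  obtain ⟨a, ha, hT⟩ := h
  exact Finset.sum_pos' (fun b _ => mul_nonneg (hπ0 b) (hT0 s b s'))
    ⟨a, ha, mul_pos (hπpos a ha) hT⟩

end MDP

theorem edge_preserving_tscc_general {S A : Type*}
    (avail : S → Finset A) (T : S → A → S → ℝ) (β : S → ℝ) (π : S → A → ℝ)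
    (hT0 : ∀ s a s', 0 ≤ T s a s')
    (hpol : IsPolicy avail π)
    (hpos : ∀ s ∈ rSet (mdpEdge avail T) β, ∀ a ∈ avail s, 0 < π s a)
    (hrec : rSet (chainEdge avail T π) β = rSet (mdpEdge avail T) β) :
    ∀ C : Set S, IsTSCC (mdpEdge avail T) β C →
      IsTSCC (chainEdge avail T π) β C := by
  intro C hC
  have hCr : ∀ s ∈ C, s ∈ rSet (mdpEdge avail T) β := fun s hs => ⟨C, hC, hs⟩
  obtain ⟨s, hs⟩ := hC.1
  exact hC.of_edge_iff_on (fun _ _ => mdpEdge_of_chainEdge hT0)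
    (fun s hs _ => chainEdge_of_mdpEdge hT0 (hpol.1 s) (hpos s (hCr s hs)))
    ⟨s, hs, hrec ▸ hCr s hs⟩

/-- Every edge-preserving policy of a finite MDP is class-preserving:
if `π` plays every available action with positive probability on the TSCC states and
the union of TSCC states of the induced chain equals that of the MDP, then each TSCC
of the MDP is exactly a TSCC of the induced Markov chain `M_π`. -/
theorem edge_preserving_tscc {S A : Type*} [Fintype S]
    (avail : S → Finset A) (T : S → A → S → ℝ) (β : S → ℝ) (π : S → A → ℝ)
    (hT0 : ∀ s a s', 0 ≤ T s a s')
    (hpol : IsPolicy avail π)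
    (hpos : ∀ s ∈ rSet (mdpEdge avail T) β, ∀ a ∈ avail s, 0 < π s a)
    (hrec : rSet (chainEdge avail T π) β = rSet (mdpEdge avail T) β) :
    ∀ C : Set S, IsTSCC (mdpEdge avail T) β C →
      IsTSCC (chainEdge avail T π) β C :=
  edge_preserving_tscc_general avail T β π hT0 hpol hpos hrec
end

section
/- Let (x,y) satisfy the multichain LP constraints: (i) ∑_{s,a} x_{sa}T(s'|s,a) = ∑_a x_{s'a} for all s'; (ii) ∑_{s,a} y_{sa}T(s'|s,a) = ∑_a (x_{s'a}+y_{s'a}) − β_{s'} for all s'; (iii) x vanishes on states outside the TSCCs; x ∈ [0,1], y ≥ 0. If π is the policy derived from (x,y) by normalization, then every state outside the TSCCs of the MDP is transient or isolated in the induced Markov chain M_π. -/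
open Filter

/-- If `(x,y)` satisfies the multichain LP constraints and `π` is the
policy derived from `(x,y)` by normalization, then every state outside the TSCCs of the
MDP is transient or isolated in the induced chain `M_π`, i.e. it lies outside the TSCCs
of `M_π`. -/
theorem lp_states_outside_tsccs_transient {S A : Type*} [Fintype S]
    (avail : S → Finset A) (T : S → A → S → ℝ) (β : S → ℝ)
    (x y π : S → A → ℝ)
    (hT0 : ∀ s a s', 0 ≤ T s a s')
    (hT1 : ∀ s, ∀ a ∈ avail s, ∑ s', T s a s' = 1)
    (hβ0 : ∀ s, 0 ≤ β s) (hβ1 : ∑ s, β s = 1)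
    (hLP : LPConstraints avail T β x y)
    (hpol : IsPolicy avail π)
    (hder : DerivedPolicy avail x y π) :
    ∀ f : S, f ∉ rSet (mdpEdge avail T) β →
      f ∉ rSet (chainEdge avail T π) β := by
  classical
  intro f hf hfr
  obtain ⟨D, hD, hfD⟩ := hfr
  obtain ⟨hDne, hDconn, hDclosed, s₀, hβs₀, d, hdD, hpathd⟩ := hD
  -- chain edges are mdp edges
  have hce : ∀ s s', chainEdge avail T π s s' → mdpEdge avail T s s' := by
    intro s s' h
    by_contra hm
    have hz : ∑ a ∈ avail s, π s a * T s a s' = 0 := by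
      apply Finset.sum_eq_zero
      intro a ha
      rcases lt_or_eq_of_le (hT0 s a s') with hT | hT
      · exact absurd ⟨a, ha, hT⟩ hm
      · rw [← hT, mul_zero]
    have h' : (0:ℝ) < ∑ a ∈ avail s, π s a * T s a s' := h
    rw [hz] at h'
    exact lt_irrefl 0 h'
  -- reachability stays in mdp-closed sets
  have hclosure : ∀ (C : Set S), (∀ s ∈ C, ∀ s', mdpEdge avail T s s' → s' ∈ C) →
      ∀ a b, Relation.ReflTransGen (chainEdge avail T π) a b → a ∈ C → b ∈ C := by
    intro C hC a b hab
    induction hab with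
    | refl => exact id
    | tail _ he ih => exact fun ha => hC _ (ih ha) _ (hce _ _ he)
  -- D is disjoint from the MDP recurrent set
  have hDr : ∀ s ∈ D, s ∉ rSet (mdpEdge avail T) β := by
    intro s hs hsr
    obtain ⟨C, hC, hsC⟩ := hsr
    exact hf ⟨C, hC, hclosure C hC.2.2.1 s f (hDconn s hs f hfD) hsC⟩
  -- y-flow cannot leave D
  have hyT : ∀ s ∈ D, ∀ a ∈ avail s, ∀ s', s' ∉ D → y s a * T s a s' = 0 := by
    intro s hs a ha s' hs'
    by_contra h
    have hy : 0 < y s a :=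
      lt_of_le_of_ne (hLP.2.1 s a) (by intro h0; exact h (by rw [← h0, zero_mul]))
    have hT : 0 < T s a s' :=
      lt_of_le_of_ne (hT0 s a s') (by intro h0; exact h (by rw [← h0, mul_zero]))
    have hys : 0 < ∑ a' ∈ avail s, y s a' :=
      lt_of_lt_of_le hy (Finset.single_le_sum (fun a' _ => hLP.2.1 s a') ha)
    have hxs : ∑ a' ∈ avail s, x s a' = 0 := hLP.2.2.2.2 s (hDr s hs)
    have hπ : π s a = y s a / ∑ a' ∈ avail s, y s a' := hder.2 s hxs hys a
    have hedge : chainEdge avail T π s s' := by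
      have hpa : 0 < π s a * T s a s' := mul_pos (by rw [hπ]; exact div_pos hy hys) hT
      exact lt_of_lt_of_le hpa
        (Finset.single_le_sum (fun a' _ => mul_nonneg (hpol.1 s a') (hT0 s a' s')) ha)
    exact hs' (hDclosed s hs s' hedge)
  -- summing the y-flow equation over D
  have hEq : ∑ s' ∈ Finset.univ.filter (fun s'' => s'' ∈ D),
        (∑ s, ∑ a ∈ avail s, y s a * T s a s')
      = ∑ s' ∈ Finset.univ.filter (fun s'' => s'' ∈ D),
        ((∑ a ∈ avail s', (x s' a + y s' a)) - β s') :=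
    Finset.sum_congr rfl (fun s' _ => hLP.2.2.2.1 s')
  have hxz' : ∀ s' ∈ Finset.univ.filter (fun s'' => s'' ∈ D), ∑ a ∈ avail s', x s' a = 0 := by
    intro s' hs'
    exact hLP.2.2.2.2 s' (hDr s' (by simpa using hs'))
  have hRHS : ∑ s' ∈ Finset.univ.filter (fun s'' => s'' ∈ D),
        ((∑ a ∈ avail s', (x s' a + y s' a)) - β s')
      = (∑ s' ∈ Finset.univ.filter (fun s'' => s'' ∈ D), ∑ a ∈ avail s', y s' a)
        - ∑ s' ∈ Finset.univ.filter (fun s'' => s'' ∈ D), β s' := by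
    rw [← Finset.sum_sub_distrib]
    apply Finset.sum_congr rfl
    intro s' hs'
    rw [Finset.sum_add_distrib, hxz' s' hs', zero_add]
  have hLHS1 : ∑ s' ∈ Finset.univ.filter (fun s'' => s'' ∈ D),
        (∑ s, ∑ a ∈ avail s, y s a * T s a s')
      = ∑ s, ∑ s' ∈ Finset.univ.filter (fun s'' => s'' ∈ D), ∑ a ∈ avail s, y s a * T s a s' :=
    Finset.sum_comm
  have hsplit : (∑ s ∈ Finset.univ.filter (fun s => s ∈ D),
        ∑ s' ∈ Finset.univ.filter (fun s'' => s'' ∈ D), ∑ a ∈ avail s, y s a * T s a s')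
      + (∑ s ∈ Finset.univ.filter (fun s => ¬ s ∈ D),
        ∑ s' ∈ Finset.univ.filter (fun s'' => s'' ∈ D), ∑ a ∈ avail s, y s a * T s a s')
      = ∑ s, ∑ s' ∈ Finset.univ.filter (fun s'' => s'' ∈ D), ∑ a ∈ avail s, y s a * T s a s' :=
    Finset.sum_filter_add_sum_filter_not Finset.univ (fun s => s ∈ D) _
  have hin : ∀ s ∈ Finset.univ.filter (fun s => s ∈ D),
      ∑ s' ∈ Finset.univ.filter (fun s'' => s'' ∈ D), ∑ a ∈ avail s, y s a * T s a s'
      = ∑ a ∈ avail s, y s a := by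
    intro s hs
    have hsD : s ∈ D := by simpa using hs
    rw [Finset.sum_comm]
    apply Finset.sum_congr rfl
    intro a ha
    have h1 : (∑ s' ∈ Finset.univ.filter (fun s'' => s'' ∈ D), y s a * T s a s')
        + (∑ s' ∈ Finset.univ.filter (fun s'' => ¬ s'' ∈ D), y s a * T s a s')
        = ∑ s', y s a * T s a s' :=
      Finset.sum_filter_add_sum_filter_not Finset.univ (fun s'' => s'' ∈ D) _
    have h2 : ∑ s' ∈ Finset.univ.filter (fun s'' => ¬ s'' ∈ D), y s a * T s a s' = 0 :=
      Finset.sum_eq_zero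
        (fun s' hs' => hyT s hsD a ha s' (by simpa using (Finset.mem_filter.mp hs').2))
    have h3 : ∑ s', y s a * T s a s' = y s a := by
      rw [← Finset.mul_sum, hT1 s a ha, mul_one]
    linarith
  have hin' : ∑ s ∈ Finset.univ.filter (fun s => s ∈ D),
        ∑ s' ∈ Finset.univ.filter (fun s'' => s'' ∈ D), ∑ a ∈ avail s, y s a * T s a s'
      = ∑ s ∈ Finset.univ.filter (fun s => s ∈ D), ∑ a ∈ avail s, y s a :=
    Finset.sum_congr rfl hin
  have hOutnn : 0 ≤ ∑ s ∈ Finset.univ.filter (fun s => ¬ s ∈ D),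
      ∑ s' ∈ Finset.univ.filter (fun s'' => s'' ∈ D), ∑ a ∈ avail s, y s a * T s a s' :=
    Finset.sum_nonneg (fun s _ => Finset.sum_nonneg (fun s' _ =>
      Finset.sum_nonneg (fun a _ => mul_nonneg (hLP.2.1 s a) (hT0 s a s'))))
  have hβnn : 0 ≤ ∑ s' ∈ Finset.univ.filter (fun s'' => s'' ∈ D), β s' :=
    Finset.sum_nonneg (fun s' _ => hβ0 s')
  have hsame : ∑ s ∈ Finset.univ.filter (fun s => s ∈ D), ∑ a ∈ avail s, y s a
      = ∑ s' ∈ Finset.univ.filter (fun s'' => s'' ∈ D), ∑ a ∈ avail s', y s' a := rfl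
  have hOut0 : ∑ s ∈ Finset.univ.filter (fun s => ¬ s ∈ D),
      ∑ s' ∈ Finset.univ.filter (fun s'' => s'' ∈ D), ∑ a ∈ avail s, y s a * T s a s' = 0 := by
    have := hEq
    rw [hRHS, hLHS1, ← hsplit, hin'] at this
    linarith
  have hβD0 : ∑ s' ∈ Finset.univ.filter (fun s'' => s'' ∈ D), β s' = 0 := by
    have := hEq
    rw [hRHS, hLHS1, ← hsplit, hin'] at this
    linarith
  -- β vanishes on D
  have hβD : ∀ s ∈ D, β s = 0 := by
    intro s hs
    have := (Finset.sum_eq_zero_iff_of_nonneg (fun s' _ => hβ0 s')).mp hβD0 s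
      (by simp [hs])
    exact this
  -- no y-flow enters D from outside
  have hOut : ∀ t, t ∉ D → ∀ t' ∈ D, ∀ a ∈ avail t, y t a * T t a t' = 0 := by
    intro t ht t' ht' a ha
    have h1 := (Finset.sum_eq_zero_iff_of_nonneg (fun s hs =>
      Finset.sum_nonneg (fun s' _ => Finset.sum_nonneg
        (fun a' _ => mul_nonneg (hLP.2.1 s a') (hT0 s a' s'))))).mp hOut0 t (by simp [ht])
    have h2 := (Finset.sum_eq_zero_iff_of_nonneg (fun s' _ =>
      Finset.sum_nonneg (fun a' _ => mul_nonneg (hLP.2.1 t a') (hT0 t a' s')))).mp h1 t'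
      (by simp [ht'])
    exact (Finset.sum_eq_zero_iff_of_nonneg
      (fun a' _ => mul_nonneg (hLP.2.1 t a') (hT0 t a' t'))).mp h2 a ha
  -- main induction along the reaching path
  have hmain : ∀ t, Relation.ReflTransGen (chainEdge avail T π) s₀ t →
      t ∉ D ∧ (t ∈ rSet (mdpEdge avail T) β ∨ 0 < ∑ a ∈ avail t, y t a) := by
    intro t hpath
    induction hpath with
    | refl =>
      refine ⟨fun hs₀D => absurd (hβD s₀ hs₀D) (ne_of_gt hβs₀), ?_⟩
      by_cases hr : s₀ ∈ rSet (mdpEdge avail T) β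
      · exact Or.inl hr
      · right
        have hx0 := hLP.2.2.2.2 s₀ hr
        have hflow := hLP.2.2.2.1 s₀
        rw [Finset.sum_add_distrib, hx0, zero_add] at hflow
        have hnn : 0 ≤ ∑ s, ∑ a ∈ avail s, y s a * T s a s₀ :=
          Finset.sum_nonneg (fun s _ => Finset.sum_nonneg
            (fun a _ => mul_nonneg (hLP.2.1 s a) (hT0 s a s₀)))
        linarith
    | @tail t t' hab hbc ih =>
      obtain ⟨htD, hty⟩ := ih
      by_cases hr : t ∈ rSet (mdpEdge avail T) β
      · obtain ⟨C, hC, htC⟩ := hr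
        have ht'C : t' ∈ C := hC.2.2.1 t htC t' (hce t t' hbc)
        have ht'r : t' ∈ rSet (mdpEdge avail T) β := ⟨C, hC, ht'C⟩
        exact ⟨fun h => hDr t' h ht'r, Or.inl ht'r⟩
      · have hy : 0 < ∑ a ∈ avail t, y t a := hty.resolve_left hr
        have hx0 := hLP.2.2.2.2 t hr
        have hbc' : (0:ℝ) < ∑ a ∈ avail t, π t a * T t a t' := hbc
        have hyπ : ∀ a ∈ avail t, y t a = π t a * (∑ a' ∈ avail t, y t a') := by
          intro a ha
          rw [hder.2 t hx0 hy a, div_mul_cancel₀ _ (ne_of_gt hy)]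
        have hpos : 0 < ∑ a ∈ avail t, y t a * T t a t' := by
          have heq : ∑ a ∈ avail t, y t a * T t a t'
              = (∑ a' ∈ avail t, y t a') * ∑ a ∈ avail t, π t a * T t a t' := by
            rw [Finset.mul_sum]
            exact Finset.sum_congr rfl (fun a ha => by rw [hyπ a ha]; ring)
          rw [heq]
          exact mul_pos hy hbc'
        have ht'D : t' ∉ D := by
          intro ht'
          have hz : ∑ a ∈ avail t, y t a * T t a t' = 0 :=
            Finset.sum_eq_zero (fun a ha => hOut t htD t' ht' a ha)
          rw [hz] at hpos
          exact lt_irrefl 0 hpos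
        refine ⟨ht'D, ?_⟩
        by_cases hr' : t' ∈ rSet (mdpEdge avail T) β
        · exact Or.inl hr'
        · right
          have hx0' := hLP.2.2.2.2 t' hr'
          have hflow := hLP.2.2.2.1 t'
          rw [Finset.sum_add_distrib, hx0', zero_add] at hflow
          have hge : ∑ a ∈ avail t, y t a * T t a t'
              ≤ ∑ s, ∑ a ∈ avail s, y s a * T s a t' :=
            Finset.single_le_sum (fun s _ => Finset.sum_nonneg
              (fun a _ => mul_nonneg (hLP.2.1 s a) (hT0 s a t'))) (Finset.mem_univ t)
          have hb := hβ0 t'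
          linarith
  exact (hmain d hpathd).1 hdD
end

section
/- For a stationary policy π whose induced chain is class-preserving up to unichain, if (x,y) satisfies the multichain LP constraints and π is the derived policy, then for every state f outside the TSCCs of the MDP, y_f := ∑_a y_{fa} equals the expected total number of visits to f under π, namely β_F^⊤(I−Z_π)^{-1}e_f. -/
open Filter

/-- A TSCC-union is closed under the edge relation. -/
lemma rSet_closed {S : Type*} {E : S → S → Prop} {β : S → ℝ} {s s' : S}
    (hs : s ∈ rSet E β) (h : E s s') : s' ∈ rSet E β := by
  obtain ⟨C, hC, hsC⟩ := hs
  exact ⟨C, hC, hC.2.2.1 s hsC s' h⟩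

open Matrix
/-- Under the multichain LP constraints, if the derived policy `π` is
class-preserving up to unichain, then for every state `f` outside the TSCCs of the MDP,
`y_f := ∑_a y_{fa}` equals the expected total number of visits to `f` under `π`,
namely `β_F^⊤ (I − Z_π)⁻¹ e_f`. -/
theorem lp_y_equals_expected_visits {S A : Type*} [Fintype S] [DecidableEq S]
    (avail : S → Finset A) (T : S → A → S → ℝ) (β : S → ℝ)
    (x y π : S → A → ℝ)
    (hT0 : ∀ s a s', 0 ≤ T s a s')
    (hT1 : ∀ s, ∀ a ∈ avail s, ∑ s', T s a s' = 1)
    (hβ0 : ∀ s, 0 ≤ β s) (hβ1 : ∑ s, β s = 1)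
    (hLP : LPConstraints avail T β x y)
    (hpol : IsPolicy avail π)
    (hder : DerivedPolicy avail x y π)
    (hCPU : IsCPU avail T β π)
    (Tπ : Matrix S S ℝ)
    (hTπ : ∀ s s', Tπ s s' = ∑ a ∈ avail s, π s a * T s a s')
    (F : Finset S) (hF : ∀ s, s ∈ F ↔ s ∉ rSet (chainEdge avail T π) β)
    (Z : Matrix F F ℝ) (hZ : ∀ f f' : F, Z f f' = Tπ f f')
    (hinv : IsUnit (1 - Z)) :
    ∀ f : S, ∀ hf : f ∈ F, f ∉ rSet (mdpEdge avail T) β →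
      ∑ a ∈ avail f, y f a = ∑ f' : F, β f' * (1 - Z)⁻¹ f' ⟨f, hf⟩ := by
  classical
  obtain ⟨hx01, hy0, hxstat, hybal, hxF⟩ := hLP
  -- membership helpers
  have hnotF : ∀ s : S, s ∉ F → s ∈ rSet (chainEdge avail T π) β := by
    intro s hs; by_contra h'; exact hs ((hF s).mpr h')
  have hinF : ∀ s : S, s ∈ F → s ∉ rSet (chainEdge avail T π) β :=
    fun s hs => (hF s).mp hs
  have hTπ0 : ∀ s s', 0 ≤ Tπ s s' := by
    intro s s'; rw [hTπ]
    exact Finset.sum_nonneg fun a _ => mul_nonneg (hpol.1 s a) (hT0 s a s')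
  have hmdp_of_Tπ : ∀ s s', 0 < Tπ s s' → mdpEdge avail T s s' := by
    intro s s' hpos
    rw [hTπ] at hpos
    by_contra hne
    refine absurd ?_ hpos.ne'
    refine Finset.sum_eq_zero fun a ha => ?_
    rcases (hT0 s a s').eq_or_lt with h | h
    · rw [← h, mul_zero]
    · exact absurd ⟨a, ha, h⟩ hne
  -- factorization of an LP variable through the derived policy
  have hfactor : ∀ (w : S → A → ℝ) (s : S), (∀ a, 0 ≤ w s a) →
      (0 < ∑ a ∈ avail s, w s a →
        ∀ a, π s a = w s a / ∑ a' ∈ avail s, w s a') →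
      ∀ s', ∑ a ∈ avail s, w s a * T s a s'
          = (∑ a ∈ avail s, w s a) * Tπ s s' := by
    intro w s hw hπw s'
    rcases (Finset.sum_nonneg fun a (_ : a ∈ avail s) => hw a).eq_or_lt with h0 | hpos
    · have hz : ∀ a ∈ avail s, w s a = 0 :=
        (Finset.sum_eq_zero_iff_of_nonneg fun a _ => hw a).mp h0.symm
      rw [← h0, zero_mul]
      exact Finset.sum_eq_zero fun a ha => by rw [hz a ha, zero_mul]
    · have hne := hpos.ne'
      rw [hTπ, Finset.mul_sum]
      refine Finset.sum_congr rfl fun a ha => ?_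
      rw [hπw hpos a]
      field_simp
  -- leakage from MDP-recurrent states to MDP-transient states is zero
  have hleak : ∀ (w : S → A → ℝ) (s : S), s ∈ rSet (mdpEdge avail T) β →
      ∀ s', s' ∉ rSet (mdpEdge avail T) β →
      ∑ a ∈ avail s, w s a * T s a s' = 0 := by
    intro w s hs s' hs'
    refine Finset.sum_eq_zero fun a ha => ?_
    rcases (hT0 s a s').eq_or_lt with h | h
    · rw [← h, mul_zero]
    · exact absurd (rSet_closed hs ⟨a, ha, h⟩) hs'
  -- x-leakage from chain-recurrent states into F is zero
  have hxleak : ∀ s : S, s ∈ rSet (chainEdge avail T π) β →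
      ∀ s', s' ∉ rSet (chainEdge avail T π) β →
      ∑ a ∈ avail s, x s a * T s a s' = 0 := by
    intro s hs s' hs'
    refine Finset.sum_eq_zero fun a ha => ?_
    by_contra hne
    have hxa : 0 < x s a :=
      ((hx01 s a).1).lt_of_ne fun h => hne (by rw [← h, zero_mul])
    have hTa : 0 < T s a s' :=
      (hT0 s a s').lt_of_ne fun h => hne (by rw [← h, mul_zero])
    have hXs : 0 < ∑ b ∈ avail s, x s b :=
      lt_of_lt_of_le hxa (Finset.single_le_sum (fun b _ => (hx01 s b).1) ha)
    have hπa : 0 < π s a := by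
      rw [hder.1 s hXs a]; exact div_pos hxa hXs
    have hedge : chainEdge avail T π s s' := by
      show 0 < ∑ a ∈ avail s, π s a * T s a s'
      exact Finset.sum_pos' (fun b _ => mul_nonneg (hpol.1 s b) (hT0 s b s'))
        ⟨a, ha, mul_pos hπa hTa⟩
    exact hs' (rSet_closed hs hedge)
  -- vecMul expansion
  have expand : ∀ (u : F → ℝ) (f' : F),
      (u ᵥ* ((1 : Matrix F F ℝ) - Z)) f' = u f' - ∑ g : F, u g * Z g f' := by
    intro u f'
    simp only [Matrix.vecMul, dotProduct, Matrix.sub_apply, Matrix.one_apply,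
      mul_sub, Finset.sum_sub_distrib, mul_ite, mul_one, mul_zero,
      Finset.sum_ite_eq', Finset.mem_univ, if_true]
  -- solving linear systems with (1 - Z)
  have hdet : IsUnit ((1 : Matrix F F ℝ) - Z).det :=
    (Matrix.isUnit_iff_isUnit_det _).mp hinv
  have hsolve : ∀ u v : F → ℝ, u ᵥ* ((1 : Matrix F F ℝ) - Z) = v →
      u = v ᵥ* ((1 : Matrix F F ℝ) - Z)⁻¹ := by
    intro u v h
    calc u = u ᵥ* (1 : Matrix F F ℝ) := (Matrix.vecMul_one u).symm
      _ = u ᵥ* (((1 : Matrix F F ℝ) - Z) * ((1 : Matrix F F ℝ) - Z)⁻¹) := by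
          rw [Matrix.mul_nonsing_inv _ hdet]
      _ = (u ᵥ* ((1 : Matrix F F ℝ) - Z)) ᵥ* ((1 : Matrix F F ℝ) - Z)⁻¹ := by
          rw [Matrix.vecMul_vecMul]
      _ = v ᵥ* ((1 : Matrix F F ℝ) - Z)⁻¹ := by rw [h]
  -- Step 1: x vanishes on F
  have hstatF : ∀ f' : F,
      ∑ g : F, (∑ a ∈ avail (g : S), x g a) * Z g f' = ∑ a ∈ avail (f' : S), x f' a := by
    intro f'
    calc ∑ g : F, (∑ a ∈ avail (g : S), x g a) * Z g f'
        = ∑ s ∈ F, ∑ a ∈ avail s, x s a * T s a (f' : S) := by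
          rw [← Finset.sum_coe_sort F (fun s => ∑ a ∈ avail s, x s a * T s a (f' : S))]
          refine Finset.sum_congr rfl fun g _ => ?_
          rw [hZ g f', hfactor x g (fun a => (hx01 g a).1) (hder.1 g) (f' : S)]
      _ = ∑ s : S, ∑ a ∈ avail s, x s a * T s a (f' : S) := by
          refine Finset.sum_subset (Finset.subset_univ F) fun s _ hsF => ?_
          exact hxleak s (hnotF s hsF) (f' : S) (hinF (f' : S) f'.2)
      _ = ∑ a ∈ avail (f' : S), x f' a := hxstat (f' : S)
  have hX0 : ∀ g : F, ∑ a ∈ avail (g : S), x g a = 0 := by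
    have h0 : (fun g : F => ∑ a ∈ avail (g : S), x g a) ᵥ* ((1 : Matrix F F ℝ) - Z) = 0 := by
      funext f'
      rw [expand, hstatF f']
      simp
    have := hsolve _ _ h0
    rw [Matrix.zero_vecMul] at this
    exact fun g => congrFun this g
  -- Step 2: flow balance over F
  have hbalF : ∀ f' : F,
      ∑ g : F, (∑ a ∈ avail (g : S), y g a) * Z g f'
        + ∑ s ∈ Fᶜ, ∑ a ∈ avail s, y s a * T s a (f' : S)
      = (∑ a ∈ avail (f' : S), y f' a) - β f' := by
    intro f'
    have hb := hybal (f' : S)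
    rw [Finset.sum_add_distrib, hX0 f', zero_add] at hb
    calc ∑ g : F, (∑ a ∈ avail (g : S), y g a) * Z g f'
          + ∑ s ∈ Fᶜ, ∑ a ∈ avail s, y s a * T s a (f' : S)
        = ∑ s ∈ F, (∑ a ∈ avail s, y s a * T s a (f' : S))
          + ∑ s ∈ Fᶜ, ∑ a ∈ avail s, y s a * T s a (f' : S) := by
          rw [← Finset.sum_coe_sort F (fun s => ∑ a ∈ avail s, y s a * T s a (f' : S))]
          refine congrArg (· + _) (Finset.sum_congr rfl fun g _ => ?_)
          rw [hZ g f', hfactor y g (fun a => hy0 g a) (hder.2 g (hX0 g)) (f' : S)]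
      _ = ∑ s : S, ∑ a ∈ avail s, y s a * T s a (f' : S) :=
          Finset.sum_add_sum_compl F _
      _ = (∑ a ∈ avail (f' : S), y f' a) - β f' := hb
  -- the y-vector solves the system
  have hyvec : (fun g : F => ∑ a ∈ avail (g : S), y g a)
      = (fun f' : F => β f' + ∑ s ∈ Fᶜ, ∑ a ∈ avail s, y s a * T s a (f' : S))
        ᵥ* ((1 : Matrix F F ℝ) - Z)⁻¹ := by
    refine hsolve _ _ ?_
    funext f'
    rw [expand]
    have := hbalF f'
    linarith
  -- block-triangular structure
  set b : F → ℕ := fun g => if (g : S) ∈ rSet (mdpEdge avail T) β then 1 else 0 with hb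
  have htri : BlockTriangular ((1 : Matrix F F ℝ) - Z) b := by
    intro i j hij
    by_cases hi : (i : S) ∈ rSet (mdpEdge avail T) β
    · by_cases hj : (j : S) ∈ rSet (mdpEdge avail T) β
      · simp [hb, hi, hj] at hij
      · have hne : i ≠ j := fun h => hj (h ▸ hi)
        have hZ0 : Z i j = 0 := by
          rcases (hTπ0 (i : S) (j : S)).eq_or_lt with h | h
          · rw [hZ, ← h]
          · exact absurd (rSet_closed hi (hmdp_of_Tπ _ _ h)) hj
        rw [Matrix.sub_apply, Matrix.one_apply_ne hne, hZ0, sub_zero]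
    · simp [hb, hi] at hij
  haveI : Invertible ((1 : Matrix F F ℝ) - Z) := hinv.invertible
  have htriN : BlockTriangular ((1 : Matrix F F ℝ) - Z)⁻¹ b :=
    Matrix.blockTriangular_inv_of_blockTriangular htri
  -- conclude
  intro f hf hfm
  have hfe := congrFun hyvec ⟨f, hf⟩
  rw [hfe]
  simp only [Matrix.vecMul, dotProduct]
  rw [show (∑ f' : F, (β (f' : S)
        + ∑ s ∈ Fᶜ, ∑ a ∈ avail s, y s a * T s a (f' : S))
        * ((1 : Matrix F F ℝ) - Z)⁻¹ f' ⟨f, hf⟩)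
      = ∑ f' : F, (β (f' : S) * ((1 : Matrix F F ℝ) - Z)⁻¹ f' ⟨f, hf⟩
        + (∑ s ∈ Fᶜ, ∑ a ∈ avail s, y s a * T s a (f' : S))
          * ((1 : Matrix F F ℝ) - Z)⁻¹ f' ⟨f, hf⟩) from
      Finset.sum_congr rfl fun f' _ => add_mul _ _ _,
    Finset.sum_add_distrib]
  have hzero : ∑ f' : F, (∑ s ∈ Fᶜ, ∑ a ∈ avail s, y s a * T s a (f' : S))
      * ((1 : Matrix F F ℝ) - Z)⁻¹ f' ⟨f, hf⟩ = 0 := by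
    refine Finset.sum_eq_zero fun f' _ => ?_
    by_cases hm : (f' : S) ∈ rSet (mdpEdge avail T) β
    · have hlt : b ⟨f, hf⟩ < b f' := by simp [hb, hfm, hm]
      rw [htriN hlt, mul_zero]
    · have hL : ∑ s ∈ Fᶜ, ∑ a ∈ avail s, y s a * T s a (f' : S) = 0 := by
        refine Finset.sum_eq_zero fun s hs => ?_
        have hsR : s ∈ rSet (mdpEdge avail T) β :=
          hCPU.1 (hnotF s (Finset.mem_compl.mp hs))
        exact hleak y s hsR (f' : S) hm
      rw [hL, zero_mul]
  rw [hzero, add_zero]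
end
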